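/- arXiv:2006.06757 — 4 statements merged into one kernel-verified Lean document; each statement's English description precedes it below -/
import Mathlib

section
/- Let R be a ring which has only finitely many simple right R-modules up to isomorphism, and let M be a distributive right R-module. Then M is finite-dimensional, i.e., M does not contain an infinite direct sum of nonzero submodules. -/
/-- A module is *distributive* if its lattice of submodules is distributive, i.e.
`X ⊓ (Y ⊔ Z) = (X ⊓ Y) ⊔ (X ⊓ Z)` for all submodules `X, Y, Z`. -/
def IsDistribModule (R M : Type*) [Ring R] [AddCommGroup M] [Module R M] : Prop :=
  ∀ X Y Z : Submodule R M, X ⊓ (Y ⊔ Z) = X ⊓ Y ⊔ X ⊓ Z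

/-- A module is *finite-dimensional* (in the sense of Goldie/uniform dimension) if it
does not contain an infinite direct sum of nonzero submodules, i.e. every independent
family of nonzero submodules is finite. -/
def IsFinDimModule (R M : Type*) [Ring R] [AddCommGroup M] [Module R M] : Prop :=
  ∀ (ι : Type) (N : ι → Submodule R M), iSupIndep N → (∀ i, N i ≠ ⊥) → Finite ι

/-- A ring `R` has only finitely many simple right `R`-modules up to isomorphism:
since every simple right module is isomorphic to a quotient of `R` (as a right module,
i.e. as an `Rᵐᵒᵖ`-module), this says that there is a finite set of right ideals such that
every simple quotient of `R` is isomorphic to a quotient by one of them. -/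
def HasFinitelyManySimpleRightModules (R : Type*) [Ring R] : Prop :=
  ∃ s : Finset (Submodule Rᵐᵒᵖ R),
    ∀ I : Submodule Rᵐᵒᵖ R, IsSimpleModule Rᵐᵒᵖ (R ⧸ I) →
      ∃ J ∈ s, Nonempty ((R ⧸ I) ≃ₗ[Rᵐᵒᵖ] (R ⧸ J))

/-!
Choose nonzero `xᵢ ∈ Nᵢ` and maximal right ideals `mᵢ ⊇ ann xᵢ`. With infinitely many indices
but finitely many simple modules, some `i ≠ j` have `R/mᵢ ≅ R/mⱼ`. Modulo `xᵢmᵢ + xⱼmⱼ` the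
cyclic submodules `xᵢR` and `xⱼR` become independent copies of `R/mᵢ` and `R/mⱼ`. But quotients
of distributive modules are distributive, and in a distributive module two independent isomorphic
submodules vanish: the graph of the isomorphism meets both of them trivially and lies in their sum.
-/

open LinearMap Submodule

theorem sup_inf_sup_eq_of_disjoint {α : Type*} [Lattice α] [OrderBot α] [IsModularLattice α]
    {a b a' b' : α} (hab : Disjoint a b) (ha : a' ≤ a) (hb : b' ≤ b) :
    (a' ⊔ b' ⊔ a) ⊓ (a' ⊔ b' ⊔ b) = a' ⊔ b' := by
  have hb' : b ⊓ (a ⊔ b') = b' := by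
    rw [← inf_sup_assoc_of_le a hb, hab.symm.eq_bot, bot_sup_eq]
  rw [sup_right_comm, sup_eq_right.mpr ha, sup_assoc, sup_eq_right.mpr hb, inf_comm,
    sup_inf_assoc_of_le b (le_sup_of_le_left ha), hb']

section Distributive

variable {S M P Q : Type*} [Ring S] [AddCommGroup M] [Module S M]
  [AddCommGroup P] [Module S P] [AddCommGroup Q] [Module S Q]

theorem IsDistribModule.quotient (hM : IsDistribModule S M) (K : Submodule S M) :
    IsDistribModule S (M ⧸ K) := by
  have comap_sup (X Y : Submodule S (M ⧸ K)) :
      comap K.mkQ (X ⊔ Y) = comap K.mkQ X ⊔ comap K.mkQ Y := by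
    conv_lhs => rw [← map_comap_eq_of_surjective K.mkQ_surjective X,
      ← map_comap_eq_of_surjective K.mkQ_surjective Y, ← Submodule.map_sup, comap_map_mkQ]
    refine sup_eq_right.mpr (le_sup_of_le_left ?_)
    simpa using ker_le_comap K.mkQ (p := X)
  intro X Y Z
  apply comap_injective_of_surjective K.mkQ_surjective
  simp only [comap_inf, comap_sup]
  exact hM _ _ _

theorem IsDistribModule.eq_bot_of_disjoint_of_equiv (hM : IsDistribModule S M)
    {A B : Submodule S M} (hAB : Disjoint A B) (e : A ≃ₗ[S] B) : A = ⊥ := by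
  set D := range (A.subtype + B.subtype ∘ₗ e.toLinearMap)
  have mem_D (a : A) : (a : M) + e a ∈ D := ⟨a, rfl⟩
  have hDA : D ⊓ A = ⊥ := by
    refine eq_bot_iff.mpr fun _ ⟨⟨a, ha⟩, hzA⟩ => ?_
    have hea : (e a : M) ∈ A := by
      simpa [← ha] using sub_mem hzA a.2
    have : e a = 0 := Subtype.ext (disjoint_def.mp hAB _ hea (e a).2)
    simp [← ha, e.map_eq_zero_iff.mp this]
  have hDB : D ⊓ B = ⊥ := by
    refine eq_bot_iff.mpr fun _ ⟨⟨a, ha⟩, hzB⟩ => ?_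
    have ha' : (a : M) ∈ B := by
      simpa [← ha] using sub_mem hzB (e a).2
    have : a = 0 := Subtype.ext (disjoint_def.mp hAB _ a.2 ha')
    simp [← ha, this]
  have hD : D = ⊥ := by
    have hDle : D ≤ A ⊔ B := by
      rintro _ ⟨a, rfl⟩
      exact add_mem_sup a.2 (e a).2
    rw [← inf_eq_left.mpr hDle, hM, hDA, hDB, sup_bot_eq]
  refine eq_bot_iff.mpr fun a ha => ?_
  have hsum : a + e ⟨a, ha⟩ = 0 := by simpa [hD] using mem_D ⟨a, ha⟩
  have haB : a ∈ B := by
    rw [eq_neg_of_add_eq_zero_left hsum]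
    exact neg_mem (e _).2
  exact disjoint_def.mp hAB a ha haB

theorem ker_mkQ_comp_eq_of_disjoint {f : P →ₗ[S] M} {g : Q →ₗ[S] M}
    (hfg : Disjoint (range f) (range g)) {I : Submodule S P} (hI : ker f ≤ I)
    (J : Submodule S Q) : ker ((map f I ⊔ map g J).mkQ ∘ₗ f) = I := by
  have hK : (map f I ⊔ map g J) ⊓ range f = map f I := by
    rw [sup_inf_assoc_of_le _ (map_le_range), (hfg.symm.mono_left map_le_range).eq_bot,
      sup_bot_eq]
  have hrange : comap f (range f) = ⊤ := by
    rw [range_eq_map, comap_map_eq, top_sup_eq]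
  rw [ker_comp, ker_mkQ, ← inf_top_eq (comap f _), ← hrange, ← comap_inf, hK, comap_map_eq,
    sup_eq_left.mpr hI]

theorem disjoint_range_mkQ_comp {f : P →ₗ[S] M} {g : Q →ₗ[S] M}
    (hfg : Disjoint (range f) (range g)) (I : Submodule S P) (J : Submodule S Q) :
    Disjoint (range ((map f I ⊔ map g J).mkQ ∘ₗ f))
      (range ((map f I ⊔ map g J).mkQ ∘ₗ g)) := by
  rw [disjoint_iff, range_comp, range_comp,
    ← (comap_injective_of_surjective (mkQ_surjective _)).eq_iff, comap_inf, comap_map_mkQ,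
    comap_map_mkQ, comap_bot, ker_mkQ]
  exact sup_inf_sup_eq_of_disjoint hfg map_le_range map_le_range

theorem IsDistribModule.eq_top_of_quotient_equiv (hM : IsDistribModule S M)
    {f : P →ₗ[S] M} {g : Q →ₗ[S] M} (hfg : Disjoint (range f) (range g))
    {I : Submodule S P} {J : Submodule S Q} (hI : ker f ≤ I) (hJ : ker g ≤ J)
    (e : (P ⧸ I) ≃ₗ[S] (Q ⧸ J)) : I = ⊤ := by
  set K := map f I ⊔ map g J
  have hf : ker (K.mkQ ∘ₗ f) = I := ker_mkQ_comp_eq_of_disjoint hfg hI J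
  have hg : ker (K.mkQ ∘ₗ g) = J := by
    have := ker_mkQ_comp_eq_of_disjoint hfg.symm hJ I
    rwa [sup_comm] at this
  let eF := (quotEquivOfEq _ _ hf.symm).trans (K.mkQ ∘ₗ f).quotKerEquivRange
  let eG := (quotEquivOfEq _ _ hg.symm).trans (K.mkQ ∘ₗ g).quotKerEquivRange
  have hbot : range (K.mkQ ∘ₗ f) = ⊥ :=
    (hM.quotient K).eq_bot_of_disjoint_of_equiv (disjoint_range_mkQ_comp hfg I J)
      ((eF.symm.trans e).trans eG)
  rw [← hf, range_eq_bot.mp hbot, ker_zero]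

end Distributive

theorem exists_isCoatom_ker_le {R M : Type*} [Ring R] [AddCommGroup M] [Module Rᵐᵒᵖ M]
    {f : R →ₗ[Rᵐᵒᵖ] M} (hf : f ≠ 0) : ∃ m : Submodule Rᵐᵒᵖ R, IsCoatom m ∧ ker f ≤ m := by
  have : Module.Finite Rᵐᵒᵖ R := Module.Finite.equiv (MulOpposite.opLinearEquiv Rᵐᵒᵖ).symm
  exact (eq_top_or_exists_le_coatom (ker f)).resolve_left (by rwa [ker_eq_top])

/-- If `R` has only finitely many simple right `R`-modules up to isomorphism and `M` is a
distributive right `R`-module, then `M` is finite-dimensional. -/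
theorem stmt3 (R : Type*) [Ring R] (hfin : HasFinitelyManySimpleRightModules R)
    (M : Type*) [AddCommGroup M] [Module Rᵐᵒᵖ M] (hM : IsDistribModule Rᵐᵒᵖ M) :
    IsFinDimModule Rᵐᵒᵖ M := by
  intro ι N hN hN0
  by_contra hι
  rw [not_finite_iff_infinite] at hι
  obtain ⟨s, hs⟩ := hfin
  choose x hxN hx0 using fun i => (N i).ne_bot_iff.mp (hN0 i)
  let f i : R →ₗ[Rᵐᵒᵖ] M :=
    toSpanSingleton Rᵐᵒᵖ M (x i) ∘ₗ (MulOpposite.opLinearEquiv Rᵐᵒᵖ).toLinearMap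
  have hf0 i : f i ≠ 0 := fun h => hx0 i (by simpa [f] using LinearMap.congr_fun h 1)
  have hfN i : range (f i) ≤ N i := by
    rintro _ ⟨r, rfl⟩
    exact (N i).smul_mem _ (hxN i)
  choose m hm hfm using fun i => exists_isCoatom_ker_le (hf0 i)
  choose T hTs hT using fun i => hs (m i) (isSimpleModule_iff_isCoatom.mpr (hm i))
  obtain ⟨i, j, hij, hTij⟩ :=
    Finite.exists_ne_map_eq_of_infinite fun i => (⟨T i, hTs i⟩ : s)
  obtain ⟨ei⟩ := hT i
  obtain ⟨ej⟩ := hT j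
  have e : (R ⧸ m i) ≃ₗ[Rᵐᵒᵖ] (R ⧸ m j) :=
    ei.trans ((quotEquivOfEq _ _ (congrArg Subtype.val hTij)).trans ej.symm)
  have hfij : Disjoint (range (f i)) (range (f j)) :=
    (hN.pairwiseDisjoint hij).mono (hfN i) (hfN j)
  exact (hm i).1 (hM.eq_top_of_quotient_equiv hfij (hfm i) (hfm j) e)
end

section
/- Let R be a right semidistributive ring which has only finitely many simple right R-modules up to isomorphism. Then every cyclic right R-module is quotient finite-dimensional. -/
/-- A module is *quotient finite-dimensional* if every quotient module of it is
finite-dimensional. -/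
def IsQFDModule (R M : Type*) [Ring R] [AddCommGroup M] [Module R M] : Prop :=
  ∀ N : Submodule R M, IsFinDimModule R (M ⧸ N)

/-- A ring `A` is *right semidistributive* if, as a right module over itself
(i.e. as an `Aᵐᵒᵖ`-module), it is a direct sum of distributive submodules. -/
def IsRightSemidistributiveRing (A : Type*) [Ring A] : Prop :=
  ∃ (ι : Type) (N : ι → Submodule Aᵐᵒᵖ A),
    iSupIndep N ∧ iSup N = ⊤ ∧ ∀ i, IsDistribModule Aᵐᵒᵖ (N i)

/-!
A cyclic right module is a quotient of `R`, and since `1` lies in finitely many of the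
distributive summands of `R`, it is a sum `D₁ + ⋯ + Dₙ` of distributive submodules.
In a distributive module two disjoint isomorphic submodules vanish, so a semisimple isotypic
distributive module has length at most one. Peeling off one summand at a time, every semisimple
isotypic module that is a quotient of a submodule of `D₁ + ⋯ + Dₙ` has length at most `n`.
An infinite independent family of nonzero submodules contains `n + 1` cyclic members with
isomorphic simple quotients `S` (there are only finitely many simple modules), and their direct
sum maps onto `Sⁿ⁺¹`, which has length `n + 1`.
-/

theorem Submodule.comap_sup_of_surjective {A M N : Type*} [Ring A] [AddCommGroup M] [Module A M]
    [AddCommGroup N] [Module A N] {f : M →ₗ[A] N} (hf : Function.Surjective f)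
    (Y Z : Submodule A N) : (Y ⊔ Z).comap f = Y.comap f ⊔ Z.comap f := by
  conv_lhs => rw [← Submodule.map_sup_comap_of_surjective hf Y Z]
  rw [Submodule.comap_map_eq, sup_eq_left]
  exact le_sup_of_le_left (LinearMap.ker_le_comap f)

namespace IsDistribModule

variable {A M N : Type*} [Ring A] [AddCommGroup M] [Module A M] [AddCommGroup N] [Module A N]

theorem of_injective (f : M →ₗ[A] N) (hf : Function.Injective f) (hN : IsDistribModule A N) :
    IsDistribModule A M := fun X Y Z => by
  apply Submodule.map_injective_of_injective hf
  simp only [Submodule.map_inf _ hf, Submodule.map_sup]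
  exact hN _ _ _

theorem of_surjective (f : M →ₗ[A] N) (hf : Function.Surjective f) (hM : IsDistribModule A M) :
    IsDistribModule A N := fun X Y Z => by
  apply Submodule.comap_injective_of_surjective hf
  simp only [Submodule.comap_inf, Submodule.comap_sup_of_surjective hf]
  exact hM _ _ _

theorem map {P : Submodule A M} (hP : IsDistribModule A P) (f : M →ₗ[A] N) :
    IsDistribModule A (P.map f) :=
  hP.of_surjective _ (f.submoduleMap_surjective P)

theorem eq_bot_of_disjoint_of_linearEquiv (hM : IsDistribModule A M) {T₁ T₂ : Submodule A M}
    (hdisj : Disjoint T₁ T₂) (σ : T₁ ≃ₗ[A] T₂) : T₁ = ⊥ := by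
  -- the graph of `σ` is disjoint from `T₁` and from `T₂` but lies in `T₁ ⊔ T₂`
  set δ : T₁ →ₗ[A] M := T₁.subtype + T₂.subtype ∘ₗ σ.toLinearMap
  have hδ₁ : ∀ t, δ t ∈ T₁ → t = 0 := fun t ht => by
    have : (σ t : M) ∈ T₁ := by simpa [δ] using sub_mem ht t.2
    simpa using Submodule.disjoint_def.mp hdisj _ this (σ t).2
  have hδ₂ : ∀ t, δ t ∈ T₂ → t = 0 := fun t ht => by
    have : (t : M) ∈ T₂ := by simpa [δ] using sub_mem ht (σ t).2
    exact Subtype.ext (Submodule.disjoint_def.mp hdisj _ t.2 this)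
  have hgraph₁ : LinearMap.range δ ⊓ T₁ = ⊥ := eq_bot_iff.mpr <| by
    rintro _ ⟨⟨t, rfl⟩, ht⟩
    simp [hδ₁ t ht]
  have hgraph₂ : LinearMap.range δ ⊓ T₂ = ⊥ := eq_bot_iff.mpr <| by
    rintro _ ⟨⟨t, rfl⟩, ht⟩
    simp [hδ₂ t ht]
  have hgraph : LinearMap.range δ ≤ T₁ ⊔ T₂ := by
    rintro _ ⟨t, rfl⟩
    exact Submodule.add_mem_sup t.2 (σ t).2
  have hbot : LinearMap.range δ = ⊥ := by
    simpa [inf_eq_left.mpr hgraph, hgraph₁, hgraph₂] using hM (LinearMap.range δ) T₁ T₂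
  refine (Submodule.eq_bot_iff _).mpr fun x hx => congrArg Subtype.val (hδ₂ ⟨x, hx⟩ ?_)
  have : δ ⟨x, hx⟩ ∈ LinearMap.range δ := LinearMap.mem_range_self δ _
  rw [hbot, Submodule.mem_bot] at this
  exact this ▸ T₂.zero_mem

end IsDistribModule

section Isotypic

variable {A T : Type*} [Ring A] [AddCommGroup T] [Module A T]

theorem isIsotypicOfType_pi (S ι : Type*) [AddCommGroup S] [Module A S] [IsSimpleModule A S]
    [Finite ι] : IsIsotypicOfType A (ι → S) S := by
  classical
  refine .of_isotypicComponent_eq_top (eq_top_iff.mpr ?_)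
  rw [← LinearMap.iSup_range_single A (fun _ : ι => S)]
  exact iSup_le fun i =>
    le_sSup ⟨(LinearEquiv.ofInjective _ (Pi.single_injective (M := fun _ : ι => S) i)).symm⟩

theorem IsIsotypic.quotient [IsSemisimpleModule A T] (hT : IsIsotypic A T) (W : Submodule A T) :
    IsIsotypic A (T ⧸ W) := by
  obtain ⟨W', hW'⟩ := exists_isCompl W
  exact (W.quotientEquivOfIsCompl W' hW').isIsotypic_iff.mpr
    (hT.of_injective _ W'.injective_subtype)

theorem IsDistribModule.eq_bot_or_eq_top [IsSemisimpleModule A T] (hT : IsIsotypic A T)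
    (hd : IsDistribModule A T) (N : Submodule A T) : N = ⊥ ∨ N = ⊤ := by
  obtain ⟨N', hcompl⟩ := exists_isCompl N
  obtain hN | ⟨S₁, hS₁, _⟩ := IsSemisimpleModule.eq_bot_or_exists_simple_le N
  · exact .inl hN
  obtain hN' | ⟨S₂, hS₂, _⟩ := IsSemisimpleModule.eq_bot_or_exists_simple_le N'
  · exact .inr (eq_top_of_isCompl_bot (hN' ▸ hcompl))
  have hS₁ : S₁ = ⊥ := hd.eq_bot_of_disjoint_of_linearEquiv
    (hcompl.disjoint.mono hS₁ hS₂) (hT S₂ S₁).some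
  exact absurd hS₁ (isSimpleModule_iff_isAtom.mp ‹_›).1

theorem IsDistribModule.length_le_one [IsSemisimpleModule A T] (hT : IsIsotypic A T)
    (hd : IsDistribModule A T) : Module.length A T ≤ 1 := by
  cases subsingleton_or_nontrivial T
  · simp
  have : IsSimpleModule A T := (isSimpleModule_iff A T).mpr ⟨hd.eq_bot_or_eq_top hT⟩
  simp

end Isotypic

def HasDistribCover (A M : Type*) [Ring A] [AddCommGroup M] [Module A M] (n : ℕ) : Prop :=
  ∃ D : Fin n → Submodule A M, (∀ j, IsDistribModule A (D j)) ∧ ⨆ j, D j = ⊤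

namespace HasDistribCover

variable {A Q : Type*} [Ring A] [AddCommGroup Q] [Module A Q] {n : ℕ}

theorem of_surjective {N : Type*} [AddCommGroup N] [Module A N] (hQ : HasDistribCover A Q n)
    (f : Q →ₗ[A] N) (hf : Function.Surjective f) : HasDistribCover A N n := by
  obtain ⟨D, hD, hsup⟩ := hQ
  refine ⟨fun j => (D j).map f, fun j => (hD j).map f, ?_⟩
  rw [← Submodule.map_iSup, hsup, Submodule.map_top, LinearMap.range_eq_top.mpr hf]

theorem subsingleton (hQ : HasDistribCover A Q 0) : Subsingleton Q := by
  obtain ⟨D, -, hsup⟩ := hQ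
  rw [iSup_of_empty] at hsup
  exact (Submodule.subsingleton_iff A).mp (subsingleton_of_bot_eq_top hsup)

theorem exists_quotient (hQ : HasDistribCover A Q (n + 1)) :
    ∃ D₀ : Submodule A Q, IsDistribModule A D₀ ∧ HasDistribCover A (Q ⧸ D₀) n := by
  obtain ⟨D, hD, hsup⟩ := hQ
  refine ⟨D 0, hD 0, fun j => (D j.succ).map (D 0).mkQ, fun j => (hD _).map _, eq_top_iff.mpr ?_⟩
  rw [← (D 0).range_mkQ, LinearMap.range_eq_map, ← hsup, Submodule.map_iSup]
  refine iSup_le (Fin.cases ?_ fun j => le_iSup (fun j => (D j.succ).map (D 0).mkQ) j)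
  rw [Submodule.mkQ_map_self]
  exact bot_le

theorem length_le {P T : Type*} [AddCommGroup P] [Module A P] [AddCommGroup T] [Module A T]
    [IsSemisimpleModule A T] (hQ : HasDistribCover A Q n) (g : P →ₗ[A] Q)
    (hg : Function.Injective g) (f : P →ₗ[A] T) (hf : Function.Surjective f)
    (hT : IsIsotypic A T) : Module.length A T ≤ n := by
  induction n generalizing Q P T with
  | zero =>
    have := hQ.subsingleton
    have := hg.subsingleton
    have := hf.subsingleton
    simp
  | succ n ih =>
    obtain ⟨D₀, hD₀, hQ'⟩ := hQ.exists_quotient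
    set P₁ := LinearMap.ker (D₀.mkQ ∘ₗ g)
    set W := P₁.map f
    have hP₁ : IsDistribModule A P₁ :=
      hD₀.of_injective (g.restrict fun x hx => by simpa [P₁] using hx)
        fun x y hxy => Subtype.ext (hg (congrArg Subtype.val hxy))
    have hW : Module.length A W ≤ 1 :=
      (hP₁.map f).length_le_one (hT.of_injective _ W.injective_subtype)
    have hTW : Module.length A (T ⧸ W) ≤ n := by
      refine ih hQ' (P₁.liftQ (D₀.mkQ ∘ₗ g) le_rfl)
        (LinearMap.ker_eq_bot.mp (P₁.ker_liftQ_eq_bot' _ rfl))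
        (P₁.mapQ W f (Submodule.le_comap_map f P₁)) (fun y => ?_) (hT.quotient W)
      obtain ⟨t, rfl⟩ := W.mkQ_surjective y
      obtain ⟨p, rfl⟩ := hf t
      exact ⟨P₁.mkQ p, rfl⟩
    rw [Module.length_eq_add_of_exact W.subtype W.mkQ W.injective_subtype W.mkQ_surjective
      (LinearMap.exact_subtype_mkQ W)]
    push_cast
    exact (add_le_add hW hTW).trans_eq (add_comm _ _)

theorem card_le_of_iSupIndep {κ S : Type*} [Fintype κ] [AddCommGroup S] [Module A S]
    [IsSimpleModule A S] (hQ : HasDistribCover A Q n) {C : κ → Submodule A Q} (hC : iSupIndep C)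
    (f : ∀ j, C j →ₗ[A] S) (hf : ∀ j, Function.Surjective (f j)) : Fintype.card κ ≤ n := by
  classical
  have hsurj : Function.Surjective (LinearMap.pi fun j => f j ∘ₗ DFinsupp.lapply j) := fun u => by
    choose y hy using fun j => hf j (u j)
    exact ⟨DFinsupp.equivFunOnFintype.symm y, funext hy⟩
  simpa using hQ.length_le _ hC.dfinsupp_lsum_injective _ hsurj (isIsotypicOfType_pi S κ).isIsotypic

end HasDistribCover

theorem exists_isSimpleModule_quotient_span_singleton {A M : Type*} [Ring A] [AddCommGroup M]
    [Module A M] {x : M} (hx : x ≠ 0) :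
    ∃ L : Submodule A (Submodule.span A {x}), IsSimpleModule A (Submodule.span A {x} ⧸ L) := by
  have : Nontrivial (Submodule.span A {x}) := by
    simpa [Submodule.nontrivial_iff_ne_bot] using hx
  obtain ⟨L, hL⟩ := IsCoatomic.exists_coatom (Submodule A (Submodule.span A {x}))
  exact ⟨L, isSimpleModule_iff_isCoatom.mpr hL⟩

section RightModules

variable {R M : Type*} [Ring R] [AddCommGroup M] [Module Rᵐᵒᵖ M]

theorem exists_surjective_of_span_singleton_eq_top {m : M} (hm : Submodule.span Rᵐᵒᵖ {m} = ⊤) :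
    ∃ f : R →ₗ[Rᵐᵒᵖ] M, Function.Surjective f := by
  refine ⟨LinearMap.toSpanSingleton Rᵐᵒᵖ M m ∘ₗ (MulOpposite.opLinearEquiv Rᵐᵒᵖ).toLinearMap, ?_⟩
  rw [LinearMap.coe_comp, LinearEquiv.coe_coe]
  refine Function.Surjective.comp ?_ (MulOpposite.opLinearEquiv Rᵐᵒᵖ).surjective
  rw [← LinearMap.range_eq_top, ← LinearMap.span_singleton_eq_range, hm]

theorem exists_linearEquiv_quotient_of_isSimpleModule [IsSimpleModule Rᵐᵒᵖ M] :
    ∃ I : Submodule Rᵐᵒᵖ R, Nonempty ((R ⧸ I) ≃ₗ[Rᵐᵒᵖ] M) := by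
  have := IsSimpleModule.nontrivial Rᵐᵒᵖ M
  obtain ⟨m, hm⟩ := exists_ne (0 : M)
  obtain ⟨f, hf⟩ := exists_surjective_of_span_singleton_eq_top (R := R)
    ((eq_bot_or_eq_top (Submodule.span Rᵐᵒᵖ {m})).resolve_left (by simpa using hm))
  exact ⟨LinearMap.ker f, ⟨f.quotKerEquivOfSurjective hf⟩⟩

end RightModules

theorem IsRightSemidistributiveRing.exists_hasDistribCover {R : Type*} [Ring R]
    (hR : IsRightSemidistributiveRing R) : ∃ n, HasDistribCover Rᵐᵒᵖ R n := by
  obtain ⟨ι, N, -, hsup, hN⟩ := hR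
  have : Module.Finite Rᵐᵒᵖ R := .equiv (MulOpposite.opLinearEquiv Rᵐᵒᵖ).symm
  have htop : IsCompactElement (⊤ : Submodule Rᵐᵒᵖ R) :=
    (Submodule.fg_iff_compact ⊤).mp Module.Finite.fg_top
  obtain ⟨F, hF⟩ := CompleteLattice.IsCompactElement.exists_finset_of_le_iSup _ htop N hsup.ge
  refine ⟨F.card, fun j => N (F.equivFin.symm j), fun j => hN _, eq_top_iff.mpr ?_⟩
  rw [F.equivFin.symm.iSup_comp (g := fun i : F => N i)]
  rwa [iSup_subtype'] at hF

theorem HasFinitelyManySimpleRightModules.exists_finset_surjective {R : Type*} [Ring R]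
    (hfin : HasFinitelyManySimpleRightModules R) : ∃ s : Finset (Submodule Rᵐᵒᵖ R),
      ∀ {Q : Type*} [AddCommGroup Q] [Module Rᵐᵒᵖ Q] {x : Q}, x ≠ 0 →
        ∃ J ∈ s, IsSimpleModule Rᵐᵒᵖ (R ⧸ J) ∧
          ∃ f : Submodule.span Rᵐᵒᵖ {x} →ₗ[Rᵐᵒᵖ] R ⧸ J, Function.Surjective f := by
  obtain ⟨s, hs⟩ := hfin
  refine ⟨s, fun {Q} _ _ x hx => ?_⟩
  obtain ⟨L, _⟩ := exists_isSimpleModule_quotient_span_singleton (A := Rᵐᵒᵖ) hx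
  obtain ⟨I, ⟨e⟩⟩ :=
    exists_linearEquiv_quotient_of_isSimpleModule (R := R) (M := Submodule.span Rᵐᵒᵖ {x} ⧸ L)
  have := IsSimpleModule.congr e
  obtain ⟨J, hJs, ⟨e'⟩⟩ := hs I this
  refine ⟨J, hJs, .congr e'.symm, (e.symm.trans e').toLinearMap ∘ₗ L.mkQ, ?_⟩
  rw [LinearMap.coe_comp, LinearEquiv.coe_coe]
  exact (LinearEquiv.surjective _).comp L.mkQ_surjective

theorem HasDistribCover.isFinDimModule {R Q : Type*} [Ring R] [AddCommGroup Q] [Module Rᵐᵒᵖ Q]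
    {n : ℕ} (hfin : HasFinitelyManySimpleRightModules R) (hQ : HasDistribCover Rᵐᵒᵖ Q n) :
    IsFinDimModule Rᵐᵒᵖ Q := by
  obtain ⟨s, hs⟩ := hfin.exists_finset_surjective
  intro ι X hX hne
  by_contra hinf
  rw [not_finite_iff_infinite] at hinf
  choose x hxX hx0 using fun i => Submodule.exists_mem_ne_zero_of_ne_bot (hne i)
  choose J hJs hJ f hf using fun i => hs (hx0 i)
  obtain ⟨J₀, hJ₀⟩ := Finite.exists_infinite_fiber fun i => (⟨J i, hJs i⟩ : s)
  obtain ⟨t, hts, hcard⟩ := (Set.infinite_coe_iff.mp hJ₀).exists_subset_card_eq (n + 1)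
  have hJt : ∀ i : t, J i = J₀ := fun i => congrArg Subtype.val (hts i.2)
  obtain ⟨i₀, hi₀⟩ : t.Nonempty := Finset.card_pos.mp (by omega)
  have : IsSimpleModule Rᵐᵒᵖ (R ⧸ (J₀ : Submodule Rᵐᵒᵖ R)) := hJt ⟨i₀, hi₀⟩ ▸ hJ i₀
  have hC : iSupIndep fun i : t => Submodule.span Rᵐᵒᵖ {x i} :=
    (hX.mono fun i => (Submodule.span_singleton_le_iff_mem _ _).mpr (hxX i)).comp
      Subtype.val_injective
  have hle := hQ.card_le_of_iSupIndep hC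
    (fun i => (Submodule.quotEquivOfEq _ _ (hJt i)).toLinearMap ∘ₗ f i) fun i => by
      rw [LinearMap.coe_comp, LinearEquiv.coe_coe]
      exact (LinearEquiv.surjective _).comp (hf i)
  simp [hcard] at hle

/-- If `R` is a right semidistributive ring with only finitely many simple right
`R`-modules up to isomorphism, then every cyclic right `R`-module is quotient
finite-dimensional. -/
theorem stmt5 (R : Type*) [Ring R] (hsd : IsRightSemidistributiveRing R)
    (hfin : HasFinitelyManySimpleRightModules R)
    (M : Type*) [AddCommGroup M] [Module Rᵐᵒᵖ M]
    (hcyc : ∃ m : M, Submodule.span Rᵐᵒᵖ {m} = ⊤) :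
    IsQFDModule Rᵐᵒᵖ M := by
  obtain ⟨n, hR⟩ := hsd.exists_hasDistribCover
  obtain ⟨m, hm⟩ := hcyc
  obtain ⟨f, hf⟩ := exists_surjective_of_span_singleton_eq_top (R := R) hm
  intro N
  exact (hR.of_surjective (N.mkQ ∘ₗ f) (N.mkQ_surjective.comp hf)).isFinDimModule hfin
end

section
/- Any finite direct sum of quotient finite-dimensional modules is a quotient finite-dimensional module: if M_1, ..., M_n are right R-modules each of which is quotient finite-dimensional, then M_1 \oplus \cdots \oplus M_n is quotient finite-dimensional. -/
/-! Finite-dimensionality is closed under extensions `0 → S → M → M ⧸ S → 0`: regroup an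
infinite independent family of `M` into infinitely many infinite blocks. The blocks that meet `S`
cut out an independent family of `S`, so all but finitely many blocks miss `S`, and such a block
maps injectively to `M ⧸ S`, giving an infinite independent family there. Since a quotient of an
extension is an extension of quotients, quotient finite-dimensionality is closed under extensions
too, hence under binary and then finite direct sums. -/

open Function Submodule

theorem iSupIndep.biSup_of_pairwise_disjoint {α ι κ : Type*} [CompleteLattice α]
    [IsModularLattice α] [IsCompactlyGenerated α] {f : ι → α} (hf : iSupIndep f)
    {s : κ → Set ι} (hs : Pairwise (Disjoint on s)) :
    iSupIndep fun k ↦ ⨆ i ∈ s k, f i := by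
  intro k
  refine (hf.disjoint_biSup_biSup (t := ⋃ (l) (_ : l ≠ k), s l) ?_).mono_right ?_
  · simpa only [Set.disjoint_iUnion_right] using fun l hl ↦ hs (Ne.symm hl)
  · simp only [iSup_le_iff]
    exact fun l hl i hi ↦ le_biSup f (Set.mem_biUnion hl hi)

section

variable {R M N : Type*} [Ring R] [AddCommGroup M] [Module R M] [AddCommGroup N] [Module R N]

theorem iSupIndep.comap_subtype {ι : Type*} {P : ι → Submodule R M} (hP : iSupIndep P)
    {p : Submodule R M} (hle : ∀ i, P i ≤ p) :
    iSupIndep fun i ↦ (P i).comap p.subtype := by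
  refine (iSupIndep_map_orderIso_iff p.mapIic).mp (iSupIndep.of_coe_Iic_comp ?_)
  simpa [comp_def, map_comap_eq, inf_eq_right.mpr (hle _)] using hP

namespace IsFinDimModule

theorem of_injective (f : M →ₗ[R] N) (hf : Injective f) (h : IsFinDimModule R N) :
    IsFinDimModule R M := fun ι P hP hne ↦
  h ι _ (f.iSupIndep_map hf hP) fun i ↦ by
    simpa only [Submodule.map_bot] using (map_injective_of_injective hf).ne (hne i)

theorem finite_of_le {p : Submodule R M} (h : IsFinDimModule R p) {ι : Type}
    {P : ι → Submodule R M} (hP : iSupIndep P) (hne : ∀ i, P i ≠ ⊥) (hle : ∀ i, P i ≤ p) :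
    Finite ι :=
  h ι _ (hP.comap_subtype hle) fun i hi ↦ hne i <| by
    rw [← inf_eq_right.mpr (hle i), ← range_subtype p, ← map_comap_eq, hi, Submodule.map_bot]

theorem finite_of_disjoint_ker (f : M →ₗ[R] N) (h : IsFinDimModule R N) {ι : Type}
    {P : ι → Submodule R M} (hP : iSupIndep P) (hne : ∀ i, P i ≠ ⊥)
    (hf : Disjoint (LinearMap.ker f) (⨆ i, P i)) : Finite ι :=
  (h.of_injective _ (LinearMap.injective_domRestrict_iff.mpr hf.symm)).finite_of_le
    hP hne (le_iSup P)

theorem of_linearEquiv (e : M ≃ₗ[R] N) (h : IsFinDimModule R M) : IsFinDimModule R N :=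
  h.of_injective e.symm.toLinearMap e.symm.injective

theorem of_submodule_of_quotient (S : Submodule R M) (hS : IsFinDimModule R S)
    (hQ : IsFinDimModule R (M ⧸ S)) : IsFinDimModule R M := by
  intro ι N hN hne
  by_contra hfin
  have : Infinite ι := not_finite_iff_infinite.mp hfin
  let e : ℕ × ℕ ↪ ι := Nat.pairEquiv.toEmbedding.trans (Infinite.natEmbedding ι)
  let P := N ∘ e
  have hP : iSupIndep P := hN.comp e.injective
  let D : ℕ → Submodule R M := fun k ↦ ⨆ p ∈ Prod.fst ⁻¹' {k}, P p
  have hD : iSupIndep D := hP.biSup_of_pairwise_disjoint fun k l hkl ↦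
    Set.disjoint_iff.mpr fun p ⟨hk, hl⟩ ↦ hkl (hk.symm.trans hl)
  have hmeet : {k | ¬Disjoint S (D k)}.Finite :=
    Set.finite_coe_iff.mp <| hS.finite_of_le (P := fun k : {k | ¬Disjoint S (D k)} ↦ S ⊓ D k)
      ((hD.mono fun _ ↦ inf_le_right).comp Subtype.val_injective)
      (fun k ↦ disjoint_iff.not.mp k.2) fun _ ↦ inf_le_left
  obtain ⟨k, hk⟩ := hmeet.exists_notMem
  have hblock : Disjoint (LinearMap.ker S.mkQ) (⨆ j, P (k, j)) := by
    rw [ker_mkQ]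
    exact (not_not.mp hk).mono_right (iSup_le fun j ↦ le_biSup P rfl)
  have := hQ.finite_of_disjoint_ker S.mkQ (hP.comp fun _ _ ↦ congrArg Prod.snd)
    (fun _ ↦ hne _) hblock
  exact not_finite ℕ

end IsFinDimModule

namespace IsQFDModule

theorem isFinDimModule (h : IsQFDModule R M) : IsFinDimModule R M :=
  (h ⊥).of_injective (⊥ : Submodule R M).mkQ (LinearMap.ker_eq_bot.mp (ker_mkQ ⊥))

theorem of_surjective (f : M →ₗ[R] N) (hf : Surjective f) (h : IsQFDModule R M) :
    IsQFDModule R N := fun K ↦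
  (h _).of_linearEquiv ((K.mkQ ∘ₗ f).quotKerEquivOfSurjective ((mkQ_surjective K).comp hf))

theorem of_submodule_of_quotient (S : Submodule R M) (hS : IsQFDModule R S)
    (hQ : IsQFDModule R (M ⧸ S)) : IsQFDModule R M := by
  intro K
  let T := LinearMap.range (K.mkQ ∘ₗ S.subtype)
  have hT : IsQFDModule R T := hS.of_surjective _ (LinearMap.surjective_rangeRestrict _)
  let g : M ⧸ S →ₗ[R] (M ⧸ K) ⧸ T :=
    S.liftQ (T.mkQ ∘ₗ K.mkQ) fun x hx ↦ by
      simp only [LinearMap.mem_ker, LinearMap.comp_apply, Submodule.mkQ_apply,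
        Submodule.Quotient.mk_eq_zero]
      exact ⟨⟨x, hx⟩, rfl⟩
  have hg : Surjective g := .of_comp (g := S.mkQ) <| by
    rw [← LinearMap.coe_comp, S.liftQ_mkQ]
    exact (mkQ_surjective T).comp (mkQ_surjective K)
  exact hT.isFinDimModule.of_submodule_of_quotient T (hQ.of_surjective g hg).isFinDimModule

theorem of_exact {A B : Type*} [AddCommGroup A] [Module R A] [AddCommGroup B] [Module R B]
    {f : A →ₗ[R] M} {g : M →ₗ[R] B} (hfg : Exact f g) (hg : Surjective g)
    (hA : IsQFDModule R A) (hB : IsQFDModule R B) : IsQFDModule R M :=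
  of_submodule_of_quotient _ (hA.of_surjective _ (LinearMap.surjective_rangeRestrict _))
    (hB.of_surjective _ (hfg.linearEquivOfSurjective hg).symm.surjective)

theorem prod {A B : Type*} [AddCommGroup A] [Module R A] [AddCommGroup B] [Module R B]
    (hA : IsQFDModule R A) (hB : IsQFDModule R B) : IsQFDModule R (A × B) :=
  of_exact Exact.inl_snd LinearMap.snd_surjective hA hB

theorem of_subsingleton [Subsingleton M] : IsQFDModule R M := fun _ _ _ _ hne ↦
  have : IsEmpty _ := ⟨fun i ↦ hne i (Subsingleton.elim _ _)⟩
  inferInstance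

theorem pi_fin : ∀ {n : ℕ} {M : Fin n → Type*} [∀ i, AddCommGroup (M i)] [∀ i, Module R (M i)],
    (∀ i, IsQFDModule R (M i)) → IsQFDModule R (Π i, M i)
  | 0, _, _, _, _ => of_subsingleton
  | _ + 1, M, _, _, h => (prod (h 0) (pi_fin fun i ↦ h i.succ)).of_surjective
      (Fin.consLinearEquiv R M).toLinearMap (Fin.consLinearEquiv R M).surjective

theorem pi {ι : Type*} [Finite ι] {M : ι → Type*} [∀ i, AddCommGroup (M i)]
    [∀ i, Module R (M i)] (h : ∀ i, IsQFDModule R (M i)) : IsQFDModule R (Π i, M i) := by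
  obtain ⟨n, ⟨e⟩⟩ := Finite.exists_equiv_fin ι
  let φ := LinearEquiv.piCongrLeft R M e.symm
  exact (pi_fin fun i ↦ h (e.symm i)).of_surjective φ.toLinearMap φ.surjective

end IsQFDModule

end

/-- A finite direct sum of quotient finite-dimensional right `R`-modules (i.e.
`Rᵐᵒᵖ`-modules) is quotient finite-dimensional. -/
theorem stmt7 (R : Type*) [Ring R] (n : ℕ) (M : Fin n → Type*)
    [∀ i, AddCommGroup (M i)] [∀ i, Module Rᵐᵒᵖ (M i)]
    (h : ∀ i, IsQFDModule Rᵐᵒᵖ (M i)) :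
    IsQFDModule Rᵐᵒᵖ (Π i, M i) :=
  .pi h
end

section
/- Let F be a field and let A be the 5-dimensional F-subalgebra of the 3x3 matrix algebra over F consisting of all matrices (f_{ij}) with f_{21} = f_{23} = f_{31} = f_{32} = 0 (i.e., whose only possibly nonzero entries are f_{11}, f_{12}, f_{13}, f_{22}, f_{33}). Then A is an Artinian right semidistributive ring which is not right serial. -/
/-- A module is *uniserial* if its submodules are linearly ordered by inclusion. -/
def IsUniserialModule (R M : Type*) [Ring R] [AddCommGroup M] [Module R M] : Prop :=
  ∀ X Y : Submodule R M, X ≤ Y ∨ Y ≤ X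

/-- A ring `A` is *right serial* if, as a right module over itself
(i.e. as an `Aᵐᵒᵖ`-module), it is a direct sum of uniserial submodules. -/
def IsRightSerialRing (A : Type*) [Ring A] : Prop :=
  ∃ (ι : Type) (N : ι → Submodule Aᵐᵒᵖ A),
    iSupIndep N ∧ iSup N = ⊤ ∧ ∀ i, IsUniserialModule Aᵐᵒᵖ (N i)

/-- The subalgebra of `3 × 3` matrices over `F` whose only possibly nonzero entries are
`f₁₁, f₁₂, f₁₃, f₂₂, f₃₃`; it is `5`-dimensional over `F`. -/
def upperAlg (F : Type*) [Field F] : Subalgebra F (Matrix (Fin 3) (Fin 3) F) where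
  carrier := {M | M 1 0 = 0 ∧ M 1 2 = 0 ∧ M 2 0 = 0 ∧ M 2 1 = 0}
  add_mem' := by
    rintro x y ⟨h1, h2, h3, h4⟩ ⟨g1, g2, g3, g4⟩
    simp_all [Matrix.add_apply]
  mul_mem' := by
    rintro x y ⟨h1, h2, h3, h4⟩ ⟨g1, g2, g3, g4⟩
    simp_all [Matrix.mul_apply, Fin.sum_univ_three]
  algebraMap_mem' := by
    intro r
    simp [Matrix.algebraMap_matrix_apply]

/-! Write `eᵢ` for the diagonal matrix units (indices from `0`, as in `Fin 3`), so that
`A = e₀A ⊕ e₁A ⊕ e₂A` as right modules. The summands `e₁A = E₁₁F` and `e₂A = E₂₂F` are simple.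
The first row `e₀A` is local: any of its elements with nonzero `(0,0)`-entry generates it, and its
radical `E₀₁F ⊕ E₀₂F` is the sum of two non-isomorphic simple modules, so every submodule splits
along it and the submodule lattice is distributive. The same radical prevents seriality: in any
decomposition of `A` some summand contains an `x` with `x₀₀ ≠ 0`, and then `xE₀₁` and `xE₀₂`
generate incomparable submodules of that summand. Artinianity is finite dimensionality over `F`. -/

open Submodule MulOpposite

section ModuleLattice

variable {R M : Type*} [Ring R] [AddCommGroup M] [Module R M]

theorem IsSimpleModule.isDistribModule [IsSimpleModule R M] : IsDistribModule R M := by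
  intro X Y Z
  rcases eq_bot_or_eq_top X with rfl | rfl <;> rcases eq_bot_or_eq_top Y with rfl | rfl <;>
    rcases eq_bot_or_eq_top Z with rfl | rfl <;> simp

theorem isDistribModule_of_isAtom {N : Submodule R M} (hN : IsAtom N) :
    IsDistribModule R N :=
  have := isSimpleModule_iff_isAtom.2 hN
  IsSimpleModule.isDistribModule

theorem isDistribModule_of_inf_sup_le {N : Submodule R M}
    (h : ∀ X Y Z, X ≤ N → Y ≤ N → Z ≤ N → X ⊓ (Y ⊔ Z) ≤ X ⊓ Y ⊔ X ⊓ Z) :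
    IsDistribModule R N := by
  intro X Y Z
  have hinj := N.injective_subtype
  refine le_antisymm ?_ le_inf_sup
  rw [← map_le_map_iff_of_injective hinj, map_inf _ hinj, Submodule.map_sup, Submodule.map_sup,
    map_inf _ hinj, map_inf _ hinj]
  exact h _ _ _ (map_subtype_le _ _) (map_subtype_le _ _) (map_subtype_le _ _)

theorem IsUniserialModule.mem_span_singleton_or {N : Submodule R M}
    (hN : IsUniserialModule R N) {u v : M} (hu : u ∈ N) (hv : v ∈ N) :
    u ∈ R ∙ v ∨ v ∈ R ∙ u := by
  have key : ∀ {u v : M} (hu : u ∈ N) (hv : v ∈ N),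
      R ∙ (⟨u, hu⟩ : N) ≤ R ∙ ⟨v, hv⟩ → u ∈ R ∙ v := fun hu hv h => by
    obtain ⟨r, hr⟩ := mem_span_singleton.1 (h (mem_span_singleton_self _))
    exact mem_span_singleton.2 ⟨r, congrArg Subtype.val hr⟩
  exact (hN _ _).imp (key hu hv) (key hv hu)

theorem isAtom_span_singleton_of_mem_span_smul {x : M} (hx : x ≠ 0)
    (h : ∀ r : R, r • x ≠ 0 → x ∈ R ∙ (r • x)) : IsAtom (R ∙ x) := by
  refine ⟨span_singleton_eq_bot.not.2 hx, fun W hW => ?_⟩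
  by_contra hW0
  obtain ⟨w, hwW, hw0⟩ := exists_mem_ne_zero_of_ne_bot hW0
  obtain ⟨r, rfl⟩ := mem_span_singleton.1 (hW.le hwW)
  exact hW.not_ge ((span_singleton_le_iff_mem _ _).2
    ((span_singleton_le_iff_mem _ _).2 hwW (h r hw0)))

theorem mem_inf_sup_inf_of_isAtom {S X Y Z : Submodule R M} (hS : IsAtom S) {y z : M}
    (hyS : y ∈ S) (hzS : z ∈ S) (hy : y ∈ Y) (hz : z ∈ Z) (hX : y + z ∈ X) :
    y + z ∈ X ⊓ Y ⊔ X ⊓ Z := by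
  rcases eq_or_ne y 0 with rfl | hy0
  · rw [zero_add] at hX ⊢
    exact mem_sup_right (mem_inf.2 ⟨hX, hz⟩)
  have hSY : S ≤ Y := by
    rcases hS.le_iff.1 ((span_singleton_le_iff_mem y S).2 hyS) with h | h
    · exact absurd (span_singleton_eq_bot.1 h) hy0
    · exact h ▸ (span_singleton_le_iff_mem y Y).2 hy
  exact mem_sup_left (mem_inf.2 ⟨hX, hSY (add_mem hyS hzS)⟩)

end ModuleLattice

section RightIdeals

variable {R : Type*} [Ring R]

theorem Submodule.mem_span_op_singleton {x y : R} : x ∈ Rᵐᵒᵖ ∙ y ↔ ∃ r, y * r = x :=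
  mem_span_singleton.trans ⟨fun ⟨a, h⟩ => ⟨a.unop, h⟩, fun ⟨r, h⟩ => ⟨op r, h⟩⟩

theorem Submodule.mul_mem_right (I : Submodule Rᵐᵒᵖ R) {x : R} (hx : x ∈ I) (r : R) :
    x * r ∈ I :=
  I.smul_mem (op r) hx

theorem disjoint_span_op_singleton_one_sub {e : R} (he : IsIdempotentElem e) :
    Disjoint (Rᵐᵒᵖ ∙ e) (Rᵐᵒᵖ ∙ (1 - e)) := by
  rw [disjoint_def]
  rintro x hx hx'
  obtain ⟨r, rfl⟩ := mem_span_op_singleton.1 hx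
  obtain ⟨s, hs⟩ := mem_span_op_singleton.1 hx'
  calc e * r = e * (e * r) := by rw [← mul_assoc, he.eq]
    _ = 0 := by rw [← hs, ← mul_assoc, mul_sub, mul_one, he.eq, sub_self, zero_mul]

variable {ι : Type*} [Fintype ι] {e : ι → R}

theorem CompleteOrthogonalIdempotents.iSupIndep_span
    (he : CompleteOrthogonalIdempotents e) : iSupIndep fun i => Rᵐᵒᵖ ∙ e i := by
  refine iSupIndep_def.2 fun i =>
    (disjoint_span_op_singleton_one_sub (he.idem i)).mono_right (iSup₂_le fun j hji => ?_)
  refine (span_singleton_le_iff_mem _ _).2 (mem_span_op_singleton.2 ⟨e j, ?_⟩)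
  rw [sub_mul, one_mul, he.ortho hji.symm, sub_zero]

theorem CompleteOrthogonalIdempotents.iSup_span_eq_top
    (he : CompleteOrthogonalIdempotents e) : ⨆ i, Rᵐᵒᵖ ∙ e i = ⊤ := by
  refine eq_top_iff.2 fun x _ => ?_
  rw [← one_mul x, ← he.complete, Finset.sum_mul]
  exact sum_mem_iSup fun i => mem_span_op_singleton.2 ⟨x, rfl⟩

theorem isAtom_span_op_singleton {F : Type*} [Field F] [Algebra F R] {x : R} (hx : x ≠ 0)
    (h : ∀ m : R, ∃ c : F, x * m = c • x) : IsAtom (Rᵐᵒᵖ ∙ x) := by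
  refine isAtom_span_singleton_of_mem_span_smul hx fun r hr => ?_
  obtain ⟨c, hc⟩ := h r.unop
  rw [smul_eq_mul_unop, hc] at hr ⊢
  have hc0 : c ≠ 0 := by rintro rfl; simp at hr
  refine mem_span_op_singleton.2 ⟨c⁻¹ • 1, ?_⟩
  rw [smul_mul_smul_comm, mul_inv_cancel₀ hc0, one_smul, mul_one]

end RightIdeals

namespace upperAlg

variable {F : Type*} [Field F]

def mk (a b c d e : F) : upperAlg F :=
  ⟨!![a, b, c; 0, d, 0; 0, 0, e], by simp [upperAlg]⟩

@[simp]
theorem coe_mk (a b c d e : F) :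
    (mk a b c d e : Matrix (Fin 3) (Fin 3) F) = !![a, b, c; 0, d, 0; 0, 0, e] := rfl

theorem exists_eq_mk (x : upperAlg F) : ∃ a b c d e : F, x = mk a b c d e := by
  obtain ⟨h10, h12, h20, h21⟩ := x.2
  refine ⟨x.1 0 0, x.1 0 1, x.1 0 2, x.1 1 1, x.1 2 2, Subtype.ext ?_⟩
  ext i j
  fin_cases i <;> fin_cases j <;> simp_all

theorem mk_inj {a b c d e a' b' c' d' e' : F} :
    mk a b c d e = mk a' b' c' d' e' ↔ a = a' ∧ b = b' ∧ c = c' ∧ d = d' ∧ e = e' := by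
  refine ⟨fun h => ?_, fun h => by simp only [h]⟩
  have h' := congrArg Subtype.val h
  simp only [coe_mk, ← Matrix.ext_iff, Fin.forall_fin_succ] at h'
  simp_all

theorem mk_mul_mk (a b c d e a' b' c' d' e' : F) :
    mk a b c d e * mk a' b' c' d' e' =
      mk (a * a') (a * b' + b * d') (a * c' + c * e') (d * d') (e * e') := by
  refine Subtype.ext ?_
  rw [Subalgebra.coe_mul, coe_mk, coe_mk, coe_mk, Matrix.mul_fin_three]
  simp

theorem mk_add_mk (a b c d e a' b' c' d' e' : F) :
    mk a b c d e + mk a' b' c' d' e' = mk (a + a') (b + b') (c + c') (d + d') (e + e') := by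
  refine Subtype.ext ?_
  rw [Subalgebra.coe_add, coe_mk, coe_mk, coe_mk]
  simp

theorem smul_mk (r a b c d e : F) :
    r • mk a b c d e = mk (r * a) (r * b) (r * c) (r * d) (r * e) := by
  refine Subtype.ext ?_
  rw [Subalgebra.coe_smul, coe_mk, coe_mk]
  simp

theorem zero_eq_mk : (0 : upperAlg F) = mk 0 0 0 0 0 := by
  refine Subtype.ext ?_
  rw [Subalgebra.coe_zero, coe_mk]
  exact (Matrix.eta_fin_three 0).trans (by simp)

theorem one_eq_mk : (1 : upperAlg F) = mk 1 0 0 1 1 := by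
  refine Subtype.ext ?_
  rw [Subalgebra.coe_one, coe_mk]
  exact Matrix.one_fin_three

def diagUnit : Fin 3 → upperAlg F :=
  ![mk 1 0 0 0 0, mk 0 0 0 1 0, mk 0 0 0 0 1]

theorem completeOrthogonalIdempotents_diagUnit :
    CompleteOrthogonalIdempotents (diagUnit (F := F)) where
  idem i := by fin_cases i <;> simp [diagUnit, IsIdempotentElem, mk_mul_mk]
  ortho i j hij := by
    fin_cases i <;> fin_cases j <;> simp_all [diagUnit, mk_mul_mk, ← zero_eq_mk]
  complete := by simp [diagUnit, Fin.sum_univ_three, mk_add_mk, one_eq_mk]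

theorem isAtom_span_mk_of_forall {x : upperAlg F} (hx : x ≠ 0)
    (h : ∀ a b c d e : F, ∃ r : F, x * mk a b c d e = r • x) :
    IsAtom ((upperAlg F)ᵐᵒᵖ ∙ x) :=
  isAtom_span_op_singleton hx fun m => by
    obtain ⟨a, b, c, d, e, rfl⟩ := exists_eq_mk m
    exact h a b c d e

theorem mem_span_diagUnit_zero {x : upperAlg F} :
    x ∈ (upperAlg F)ᵐᵒᵖ ∙ diagUnit 0 ↔ ∃ a b c : F, x = mk a b c 0 0 := by
  rw [mem_span_op_singleton]
  constructor
  · rintro ⟨m, rfl⟩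
    obtain ⟨a, b, c, d, e, rfl⟩ := exists_eq_mk m
    exact ⟨a, b, c, by simp [diagUnit, mk_mul_mk]⟩
  · rintro ⟨a, b, c, rfl⟩
    exact ⟨mk a b c 0 0, by simp [diagUnit, mk_mul_mk]⟩

theorem span_diagUnit_zero_le {a b c : F} (ha : a ≠ 0) :
    (upperAlg F)ᵐᵒᵖ ∙ diagUnit 0 ≤ (upperAlg F)ᵐᵒᵖ ∙ mk a b c 0 0 :=
  (span_singleton_le_iff_mem _ _).2 <| mem_span_op_singleton.2
    ⟨mk a⁻¹ 0 0 0 0, by simp [diagUnit, mk_mul_mk, ha]⟩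

theorem mk_ne_zero_iff {a b c d e : F} :
    mk a b c d e ≠ 0 ↔ a ≠ 0 ∨ b ≠ 0 ∨ c ≠ 0 ∨ d ≠ 0 ∨ e ≠ 0 := by
  rw [zero_eq_mk, Ne, mk_inj]
  tauto

theorem isAtom_span_mk_zero_one_zero : IsAtom ((upperAlg F)ᵐᵒᵖ ∙ mk (0 : F) 1 0 0 0) :=
  isAtom_span_mk_of_forall (by simp [mk_ne_zero_iff]) fun a b c d e =>
    ⟨d, by simp [mk_mul_mk, smul_mk]⟩

theorem isAtom_span_mk_zero_zero_one : IsAtom ((upperAlg F)ᵐᵒᵖ ∙ mk (0 : F) 0 1 0 0) :=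
  isAtom_span_mk_of_forall (by simp [mk_ne_zero_iff]) fun a b c d e =>
    ⟨e, by simp [mk_mul_mk, smul_mk]⟩

theorem isAtom_span_diagUnit {i : Fin 3} (hi : i ≠ 0) :
    IsAtom ((upperAlg F)ᵐᵒᵖ ∙ diagUnit (F := F) i) := by
  fin_cases i
  · exact absurd rfl hi
  · exact isAtom_span_mk_of_forall (by simp [diagUnit, mk_ne_zero_iff]) fun a b c d e =>
      ⟨d, by simp [diagUnit, mk_mul_mk, smul_mk]⟩
  · exact isAtom_span_mk_of_forall (by simp [diagUnit, mk_ne_zero_iff]) fun a b c d e =>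
      ⟨e, by simp [diagUnit, mk_mul_mk, smul_mk]⟩

theorem mk_mul_diagUnit_one_mem (a b c : F) :
    mk a b c 0 0 * diagUnit 1 ∈ (upperAlg F)ᵐᵒᵖ ∙ mk (0 : F) 1 0 0 0 :=
  mem_span_op_singleton.2 ⟨mk 0 0 0 b 0, by simp [diagUnit, mk_mul_mk]⟩

theorem mk_mul_diagUnit_two_mem (a b c : F) :
    mk a b c 0 0 * diagUnit 2 ∈ (upperAlg F)ᵐᵒᵖ ∙ mk (0 : F) 0 1 0 0 :=
  mem_span_op_singleton.2 ⟨mk 0 0 0 0 c, by simp [diagUnit, mk_mul_mk]⟩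

theorem isDistribModule_span_diagUnit_zero :
    IsDistribModule (upperAlg F)ᵐᵒᵖ ((upperAlg F)ᵐᵒᵖ ∙ diagUnit (F := F) 0) := by
  refine isDistribModule_of_inf_sup_le fun X Y Z hX hY hZ x hx => ?_
  obtain ⟨hxX, hxYZ⟩ := mem_inf.1 hx
  obtain ⟨y, hyY, z, hzZ, rfl⟩ := mem_sup.1 hxYZ
  obtain ⟨a, b, c, rfl⟩ := mem_span_diagUnit_zero.1 (hY hyY)
  obtain ⟨a', b', c', rfl⟩ := mem_span_diagUnit_zero.1 (hZ hzZ)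
  rcases eq_or_ne a 0 with rfl | ha; swap
  · exact mem_sup_left (mem_inf.2 ⟨hxX, (span_diagUnit_zero_le ha).trans
      ((span_singleton_le_iff_mem _ _).2 hyY) (hX hxX)⟩)
  rcases eq_or_ne a' 0 with rfl | ha'; swap
  · exact mem_sup_right (mem_inf.2 ⟨hxX, (span_diagUnit_zero_le ha').trans
      ((span_singleton_le_iff_mem _ _).2 hzZ) (hX hxX)⟩)
  -- now `x` lies in the radical `E₀₁F ⊕ E₀₂F`; treat its two simple summands separately
  set y := mk 0 b c 0 0
  set z := mk 0 b' c' 0 0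
  have hx : y + z = (y * diagUnit 1 + z * diagUnit 1) + (y * diagUnit 2 + z * diagUnit 2) := by
    simp [y, z, diagUnit, mk_add_mk, mk_mul_mk]
  have hxX' : ∀ f, y * f + z * f ∈ X := fun f => add_mul y z f ▸ X.mul_mem_right hxX f
  rw [hx]
  exact add_mem
    (mem_inf_sup_inf_of_isAtom isAtom_span_mk_zero_one_zero (mk_mul_diagUnit_one_mem 0 b c)
      (mk_mul_diagUnit_one_mem 0 b' c') (Y.mul_mem_right hyY _) (Z.mul_mem_right hzZ _)
      (hxX' _))
    (mem_inf_sup_inf_of_isAtom isAtom_span_mk_zero_zero_one (mk_mul_diagUnit_two_mem 0 b c)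
      (mk_mul_diagUnit_two_mem 0 b' c') (Y.mul_mem_right hyY _) (Z.mul_mem_right hzZ _)
      (hxX' _))

theorem isRightSemidistributiveRing : IsRightSemidistributiveRing (upperAlg F) := by
  refine ⟨Fin 3, fun i => (upperAlg F)ᵐᵒᵖ ∙ diagUnit (F := F) i,
    completeOrthogonalIdempotents_diagUnit.iSupIndep_span,
    completeOrthogonalIdempotents_diagUnit.iSup_span_eq_top, fun i => ?_⟩
  rcases eq_or_ne i 0 with rfl | hi
  · exact isDistribModule_span_diagUnit_zero
  · exact isDistribModule_of_isAtom (isAtom_span_diagUnit hi)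

theorem not_isRightSerialRing : ¬ IsRightSerialRing (upperAlg F) := by
  rintro ⟨ι, N, -, hsup, huni⟩
  obtain ⟨i, x, hx, hx00⟩ : ∃ i, ∃ x ∈ N i, (x : Matrix (Fin 3) (Fin 3) F) 0 0 ≠ 0 := by
    by_contra! h
    have h1 : ((1 : upperAlg F) : Matrix (Fin 3) (Fin 3) F) 0 0 = 0 :=
      iSup_induction N (motive := fun x => (x : Matrix (Fin 3) (Fin 3) F) 0 0 = 0)
        (hsup ▸ mem_top) h rfl fun x y hx hy => by simp [hx, hy]
    simp at h1
  obtain ⟨a, b, c, d, e, rfl⟩ := exists_eq_mk x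
  replace hx00 : a ≠ 0 := by simpa using hx00
  -- `x E₀₁ = a E₀₁` and `x E₀₂ = a E₀₂` generate incomparable submodules of `N i`
  rcases (huni i).mem_span_singleton_or ((N i).mul_mem_right hx (mk 0 1 0 0 0))
      ((N i).mul_mem_right hx (mk 0 0 1 0 0)) with h | h <;>
  · obtain ⟨m, hm⟩ := mem_span_op_singleton.1 h
    obtain ⟨a', b', c', d', e', rfl⟩ := exists_eq_mk m
    simp only [mk_mul_mk, mk_inj] at hm
    grind

end upperAlg

set_option synthInstance.maxHeartbeats 1000000 in
/-- Let `F` be a field and let `A` be the `5`-dimensional `F`-algebra of all `3 × 3`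
matrices over `F` that vanish at the entries `(2,1), (2,3), (3,1), (3,2)`.  Then `A` is
an Artinian (on both sides) right semidistributive ring which is not right serial. -/
theorem stmt19 (F : Type*) [Field F] :
    IsArtinian (upperAlg F) (upperAlg F) ∧
      IsArtinian (upperAlg F)ᵐᵒᵖ (upperAlg F) ∧
      IsRightSemidistributiveRing (upperAlg F) ∧
      ¬ IsRightSerialRing (upperAlg F) :=
  ⟨isArtinian_of_tower F inferInstance, isArtinian_of_tower F inferInstance,
    upperAlg.isRightSemidistributiveRing, upperAlg.not_isRightSerialRing⟩
end
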